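/- Let (X,𝔅,μ,T) be a measure-preserving system and α = {A_1,…,A_k} a finite measurable partition of X. Then for every ε > 0 there exists δ > 0 such that for every measurable partition β = {B_1,…,B_k} of X with ∑_{i=1}^k μ(B_i Δ A_i) < δ, one has D̄_μ(T,β) > D̄_μ(T,α) − ε, and likewise D̲_μ(T,β) > D̲_μ(T,α) − ε. -/

import Mathlib

open MeasureTheory Filter Set
open scoped ENNReal symmDiff

noncomputable section

namespace EntDim

/-- An increasing sequence of positive integers `S = {s 0 < s 1 < ⋯}` (0-indexed,
so `s n` is the `(n+1)`-st element of `S`). -/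
def IsPosSeq (s : ℕ → ℕ) : Prop := StrictMono s ∧ 0 < s 0

/-- `D̄(S,τ) = limsup_n n / (s_n)^τ` (with the convention that the `n`-th term,
for `n` starting at `0`, is `(n+1)/(s n)^τ`, matching the 1-indexed definition). -/
def dimExprSup (s : ℕ → ℕ) (τ : ℝ) : ℝ≥0∞ :=
  Filter.atTop.limsup fun n : ℕ => ((n : ℝ≥0∞) + 1) / (s n : ℝ≥0∞) ^ τ

/-- `D̲(S,τ) = liminf_n n / (s_n)^τ`. -/
def dimExprInf (s : ℕ → ℕ) (τ : ℝ) : ℝ≥0∞ :=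
  Filter.atTop.liminf fun n : ℕ => ((n : ℝ≥0∞) + 1) / (s n : ℝ≥0∞) ^ τ

/-- The upper dimension `D̄(S) = inf {τ ≥ 0 | D̄(S,τ) = 0}` of a sequence. -/
def upperDim (s : ℕ → ℕ) : ℝ := sInf {τ : ℝ | 0 ≤ τ ∧ dimExprSup s τ = 0}

/-- The lower dimension `D̲(S) = inf {τ ≥ 0 | D̲(S,τ) = 0}` of a sequence. -/
def lowerDim (s : ℕ → ℕ) : ℝ := sInf {τ : ℝ | 0 ≤ τ ∧ dimExprInf s τ = 0}

variable {X : Type*} [MeasurableSpace X]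

/-- `P : ι → Set X` is a finite measurable partition of `X`. -/
def IsPartition {ι : Type*} [Fintype ι] (P : ι → Set X) : Prop :=
  (∀ i, MeasurableSet (P i)) ∧ Pairwise (Function.onFun Disjoint P) ∧ (⋃ i, P i) = Set.univ

/-- The entropy `H_μ(⋁_{i ∈ F} T^{-f i} P)` of the join of the preimage partitions
`T^{-f i} P` over a finite index set `F`. -/
def finJoinEnt (μ : Measure X) (T : X → X) {ι : Type*} [Fintype ι] (P : ι → Set X)
    (f : ℕ → ℕ) (F : Finset ℕ) : ℝ :=
  ∑ ω : F → ι, Real.negMulLog (μ (⋂ i : F, T^[f i.1] ⁻¹' (P (ω i)))).toReal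

/-- `H_μ(⋁_{i=1}^{n} T^{-s_i} P)` (with `s` 0-indexed: this is the join over the
first `n` elements of the sequence). -/
def seqJoinEnt (μ : Measure X) (T : X → X) {ι : Type*} [Fintype ι] (P : ι → Set X)
    (s : ℕ → ℕ) (n : ℕ) : ℝ :=
  finJoinEnt μ T P s (Finset.range n)

/-- `S` is an entropy generating sequence of the partition `P`:
`liminf_n (1/n) H_μ(⋁_{i=1}^n T^{-s_i} P) > 0`. -/
def IsEntGenSeq (μ : Measure X) (T : X → X) {ι : Type*} [Fintype ι] (P : ι → Set X)
    (s : ℕ → ℕ) : Prop :=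
  IsPosSeq s ∧ 0 < Filter.atTop.liminf fun n : ℕ => seqJoinEnt μ T P s n / n

/-- `S` is a positive entropy sequence of the partition `P`:
`limsup_n (1/n) H_μ(⋁_{i=1}^n T^{-s_i} P) > 0`. -/
def IsPosEntSeq (μ : Measure X) (T : X → X) {ι : Type*} [Fintype ι] (P : ι → Set X)
    (s : ℕ → ℕ) : Prop :=
  IsPosSeq s ∧ 0 < Filter.atTop.limsup fun n : ℕ => seqJoinEnt μ T P s n / n

/-- `D̄^e_μ(T,P)`: the supremum of upper dimensions over entropy generating sequences
of `P` (`0`, by convention `sSup ∅ = 0`, if there are none). This is the upper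
entropy dimension `D̄_μ(T,P)` of the partition `P`. -/
def upperEntDimPart (μ : Measure X) (T : X → X) {ι : Type*} [Fintype ι]
    (P : ι → Set X) : ℝ :=
  sSup {d : ℝ | ∃ s : ℕ → ℕ, IsEntGenSeq μ T P s ∧ d = upperDim s}

/-- `D̲^e_μ(T,P)`: the supremum of lower dimensions over entropy generating sequences,
i.e. the lower entropy dimension `D̲_μ(T,P)` of the partition `P`. -/
def lowerEntDimPart (μ : Measure X) (T : X → X) {ι : Type*} [Fintype ι]
    (P : ι → Set X) : ℝ :=
  sSup {d : ℝ | ∃ s : ℕ → ℕ, IsEntGenSeq μ T P s ∧ d = lowerDim s}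

/-- `D̄^p_μ(T,P)`: the supremum of upper dimensions over positive entropy sequences of `P`. -/
def upperPosDimPart (μ : Measure X) (T : X → X) {ι : Type*} [Fintype ι]
    (P : ι → Set X) : ℝ :=
  sSup {d : ℝ | ∃ s : ℕ → ℕ, IsPosEntSeq μ T P s ∧ d = upperDim s}

/-- `D̲^p_μ(T,P)`: the supremum of lower dimensions over positive entropy sequences of `P`. -/
def lowerPosDimPart (μ : Measure X) (T : X → X) {ι : Type*} [Fintype ι]
    (P : ι → Set X) : ℝ :=
  sSup {d : ℝ | ∃ s : ℕ → ℕ, IsPosEntSeq μ T P s ∧ d = lowerDim s}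

/-- The upper metric entropy dimension `D̄_μ(X,T)`: the supremum of `D̄_μ(T,P)`
over all finite measurable partitions `P` of `X`. -/
def upperEntDim (μ : Measure X) (T : X → X) : ℝ :=
  sSup {d : ℝ | ∃ (k : ℕ) (P : Fin k → Set X), IsPartition P ∧ d = upperEntDimPart μ T P}

/-- The lower metric entropy dimension `D̲_μ(X,T)`. -/
def lowerEntDim (μ : Measure X) (T : X → X) : ℝ :=
  sSup {d : ℝ | ∃ (k : ℕ) (P : Fin k → Set X), IsPartition P ∧ d = lowerEntDimPart μ T P}

/-- `D̄^p_μ(X,T)`: the supremum of `D̄^p_μ(T,P)` over all finite measurable partitions. -/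
def upperPosDim (μ : Measure X) (T : X → X) : ℝ :=
  sSup {d : ℝ | ∃ (k : ℕ) (P : Fin k → Set X), IsPartition P ∧ d = upperPosDimPart μ T P}

/-- The two-set partition `{A, X \ A}`. -/
def pairPart (A : Set X) : Fin 2 → Set X := ![A, Aᶜ]

/-- The dimension set `Dims_μ(X,T) = {D̄_μ(T,{A,Aᶜ}) : A ∈ 𝔅, 0 < μ(A) < 1}`. -/
def dimsSet (μ : Measure X) (T : X → X) : Set ℝ :=
  {d : ℝ | ∃ A : Set X, MeasurableSet A ∧ 0 < μ A ∧ μ A < 1 ∧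
    d = upperEntDimPart μ T (pairPart A)}

/-- The system is null: every sequence entropy (along any increasing sequence of
positive integers, for any finite measurable partition) vanishes. -/
def IsNullSystem (μ : Measure X) (T : X → X) : Prop :=
  ∀ (k : ℕ) (P : Fin k → Set X), IsPartition P → ∀ s : ℕ → ℕ, IsPosSeq s →
    Filter.atTop.limsup (fun n : ℕ => seqJoinEnt μ T P s n / n) = 0

end EntDim

/-!
If `S` generates entropy for `α` at rate `L = liminf (1/n) H(⋁_{i<n} T^{-s_i} α) > 0`, then
for every partition `β` one has `H(⋁_{i<n} T^{-s_i} α) ≤ H(⋁_{i<n} T^{-s_i} β) + n H(α|β)`,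
so `S` still generates entropy for `β` once `H(α|β) < L`. As `H(α|β) → 0` when `β → α`, a
sequence whose dimension is within `ε` of the supremum for `α` is entropy generating for every
nearby `β` as well.

The inequality is Gibbs' inequality for the joint distribution of the atoms `A ∩ B` of the two
joins, compared with the weights `μ(B) ∏_i μ(A_{ω i} | B_{η i})`: their cross entropy is exactly
`H(⋁ T^{-s_i} β) + n H(α|β)`.
-/

namespace EntDim

open Real

theorem negMulLog_add_le {a b : ℝ} (ha : 0 ≤ a) (hb : 0 ≤ b) :
    negMulLog (a + b) ≤ negMulLog a + negMulLog b := by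
  rcases ha.eq_or_lt with rfl | ha
  · simp
  rcases hb.eq_or_lt with rfl | hb
  · simp
  have h₁ := mul_le_mul_of_nonneg_left (log_le_log ha (le_add_of_nonneg_right hb.le)) ha.le
  have h₂ := mul_le_mul_of_nonneg_left (log_le_log hb (le_add_of_nonneg_left ha.le)) hb.le
  simp only [negMulLog]
  linarith

theorem negMulLog_sum_le {κ : Type*} (s : Finset κ) {f : κ → ℝ} (hf : ∀ k ∈ s, 0 ≤ f k) :
    negMulLog (∑ k ∈ s, f k) ≤ ∑ k ∈ s, negMulLog (f k) :=
  Finset.le_sum_of_subadditive_on_pred _ (0 ≤ ·) (by simp) (fun _ _ => negMulLog_add_le)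
    (fun _ _ => add_nonneg) f hf

/-- Gibbs' inequality. -/
theorem sum_negMulLog_le_neg_sum_mul_log {κ : Type*} [Fintype κ] {p q : κ → ℝ}
    (hp : ∀ k, 0 ≤ p k) (hq : ∀ k, 0 ≤ q k) (hpq : ∀ k, q k = 0 → p k = 0)
    (hsum : ∑ k, q k ≤ ∑ k, p k) :
    ∑ k, negMulLog (p k) ≤ -∑ k, p k * log (q k) := by
  have key : ∀ k, negMulLog (p k) + p k * log (q k) ≤ q k - p k := by
    intro k
    rcases (hp k).eq_or_lt with h | h
    · simp [← h, hq k]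
    have hq₀ : 0 < q k := (hq k).lt_of_ne fun h' => h.ne' (hpq k h'.symm)
    have := mul_le_mul_of_nonneg_left (log_le_sub_one_of_pos (div_pos hq₀ h)) h.le
    rw [log_div hq₀.ne' h.ne', mul_sub, mul_sub, mul_div_cancel₀ _ h.ne'] at this
    simp only [negMulLog]
    linarith
  have := Finset.sum_le_sum fun k (_ : k ∈ Finset.univ) => key k
  rw [Finset.sum_add_distrib, Finset.sum_sub_distrib] at this
  linarith

section

variable {X : Type*} [MeasurableSpace X] {μ : Measure X}

namespace IsPartition

variable {ι κ : Type*} [Fintype ι] [Fintype κ]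

theorem preimage {P : ι → Set X} (hP : IsPartition P) {g : X → X} (hg : Measurable g) :
    IsPartition fun i => g ⁻¹' P i :=
  ⟨fun i => hg (hP.1 i), fun _ _ hij => (hP.2.1 hij).preimage g,
    by rw [← Set.preimage_iUnion, hP.2.2, Set.preimage_univ]⟩

theorem inter {P : ι → Set X} {Q : κ → Set X} (hP : IsPartition P) (hQ : IsPartition Q) :
    IsPartition fun ab : ι × κ => P ab.1 ∩ Q ab.2 := by
  refine ⟨fun ab => (hP.1 ab.1).inter (hQ.1 ab.2), ?_, ?_⟩
  · rintro ⟨a, b⟩ ⟨a', b'⟩ hne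
    rw [Ne, Prod.mk.injEq, not_and_or] at hne
    rcases hne with h | h
    · exact (hP.2.1 h).mono Set.inter_subset_left Set.inter_subset_left
    · exact (hQ.2.1 h).mono Set.inter_subset_right Set.inter_subset_right
  · refine Set.eq_univ_of_forall fun x => ?_
    obtain ⟨a, ha⟩ := Set.mem_iUnion.1 (hP.2.2 ▸ Set.mem_univ x)
    obtain ⟨b, hb⟩ := Set.mem_iUnion.1 (hQ.2.2 ▸ Set.mem_univ x)
    exact Set.mem_iUnion.2 ⟨(a, b), ha, hb⟩

theorem iInter {J : Type*} [Fintype J] [DecidableEq J] {κ : J → Type*} [∀ j, Fintype (κ j)]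
    {A : ∀ j, κ j → Set X} (hA : ∀ j, IsPartition (A j)) :
    IsPartition fun ω : ∀ j, κ j => ⋂ j, A j (ω j) := by
  refine ⟨fun ω => MeasurableSet.iInter fun j => (hA j).1 (ω j), fun ω ω' hne => ?_, ?_⟩
  · obtain ⟨j, hj⟩ := Function.ne_iff.1 hne
    exact ((hA j).2.1 hj).mono (Set.iInter_subset _ j) (Set.iInter_subset _ j)
  · refine Set.eq_univ_of_forall fun x => ?_
    choose ω hω using fun j => Set.mem_iUnion.1 ((hA j).2.2 ▸ Set.mem_univ x)
    exact Set.mem_iUnion.2 ⟨ω, Set.mem_iInter.2 hω⟩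

variable [IsFiniteMeasure μ] {R : κ → Set X}

theorem sum_measureReal_inter (hR : IsPartition R) {B : Set X} (hB : MeasurableSet B) :
    ∑ k, μ.real (B ∩ R k) = μ.real B := by
  rw [← measureReal_iUnion_fintype (fun i j hij => (hR.2.1 hij).mono Set.inter_subset_right
    Set.inter_subset_right) fun k => hB.inter (hR.1 k), ← Set.inter_iUnion, hR.2.2, Set.inter_univ]

theorem sum_measureReal_inter' (hR : IsPartition R) {B : Set X} (hB : MeasurableSet B) :
    ∑ k, μ.real (R k ∩ B) = μ.real B := by
  simp_rw [Set.inter_comm _ B]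
  exact hR.sum_measureReal_inter hB

theorem sum_measureReal [IsProbabilityMeasure μ] (hR : IsPartition R) : ∑ k, μ.real (R k) = 1 := by
  simpa using hR.sum_measureReal_inter (μ := μ) MeasurableSet.univ

end IsPartition

/-- The join `⋁_j g_j⁻¹ P`, indexed by the choice `ω j` of an atom of `P` at each `j`. -/
def join {J ι : Type*} (g : J → X → X) (P : ι → Set X) (ω : J → ι) : Set X :=
  ⋂ j, g j ⁻¹' P (ω j)

def partEnt (μ : Measure X) {κ : Type*} [Fintype κ] (R : κ → Set X) : ℝ :=
  ∑ k, negMulLog (μ.real (R k))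

def condProb (μ : Measure X) (A B : Set X) : ℝ := μ.real (A ∩ B) / μ.real B

def condEnt (μ : Measure X) {ι κ : Type*} [Fintype ι] [Fintype κ] (P : ι → Set X)
    (Q : κ → Set X) : ℝ :=
  ∑ a, ∑ b, -μ.real (P a ∩ Q b) * log (condProb μ (P a) (Q b))

theorem condProb_nonneg (A B : Set X) : 0 ≤ condProb μ A B :=
  div_nonneg measureReal_nonneg measureReal_nonneg

theorem condProb_pos [IsFiniteMeasure μ] {A B : Set X} (h : 0 < μ.real (A ∩ B)) :
    0 < condProb μ A B :=
  div_pos h (h.trans_le (measureReal_mono Set.inter_subset_right))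

variable {ι κ J : Type*} [Fintype ι] [Fintype κ] [Fintype J] [DecidableEq J]

theorem IsPartition.join {P : ι → Set X} (hP : IsPartition P) {g : J → X → X}
    (hg : ∀ j, Measurable (g j)) : IsPartition (join g P) :=
  IsPartition.iInter fun j => hP.preimage (hg j)

omit [MeasurableSpace X] [Fintype ι] [Fintype κ] [Fintype J] [DecidableEq J] in
theorem join_inter_join (g : J → X → X) (P : ι → Set X) (Q : κ → Set X) (ω : J → ι)
    (η : J → κ) :
    join g P ω ∩ join g Q η = join g (fun ab : ι × κ => P ab.1 ∩ Q ab.2) fun j => (ω j, η j) := by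
  ext x
  simp [join, forall_and]

section FiniteMeasure

variable [IsFiniteMeasure μ]

/-- The atoms with `w i = c` partition `g i ⁻¹' R c`, which has the measure of `R c`. -/
theorem sum_measureReal_join_mul {R : κ → Set X} (hR : IsPartition R) {g : J → X → X}
    (hg : ∀ j, MeasurePreserving (g j) μ μ) (i : J) (φ : κ → ℝ) :
    ∑ w, μ.real (join g R w) * φ (w i) = ∑ c, μ.real (R c) * φ c := by
  classical
  have hfiber : ∀ c, ∑ w with w i = c, μ.real (join g R w) = μ.real (R c) := by
    intro c
    rw [← (hg i).measureReal_preimage (hR.1 c).nullMeasurableSet,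
      ← (hR.join fun j => (hg j).measurable).sum_measureReal_inter ((hg i).measurable (hR.1 c)),
      Finset.sum_filter]
    refine Finset.sum_congr rfl fun w _ => ?_
    split_ifs with hw
    · rw [Set.inter_eq_right.2 (hw ▸ Set.iInter_subset _ i)]
    · have hsub : join g R w ⊆ g i ⁻¹' R (w i) := Set.iInter_subset _ i
      rw [(((hR.2.1 (Ne.symm hw)).preimage (g i)).mono_right hsub).inter_eq, measureReal_empty]
  rw [← Finset.sum_fiberwise Finset.univ fun w => w i]
  refine Finset.sum_congr rfl fun c _ => ?_
  rw [← hfiber, Finset.sum_mul]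
  exact Finset.sum_congr rfl fun w hw => by rw [(Finset.mem_filter.1 hw).2]

theorem sum_measureReal_join_inter_join_mul {P : ι → Set X} {Q : κ → Set X}
    (hP : IsPartition P) (hQ : IsPartition Q) {g : J → X → X}
    (hg : ∀ j, MeasurePreserving (g j) μ μ) (i : J) (φ : ι → κ → ℝ) :
    ∑ ω, ∑ η, μ.real (join g P ω ∩ join g Q η) * φ (ω i) (η i) =
      ∑ a, ∑ b, μ.real (P a ∩ Q b) * φ a b := by
  calc ∑ ω, ∑ η, μ.real (join g P ω ∩ join g Q η) * φ (ω i) (η i)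
      = ∑ w, μ.real (join g (fun ab : ι × κ => P ab.1 ∩ Q ab.2) w) * φ (w i).1 (w i).2 := by
        simp_rw [join_inter_join, ← Fintype.sum_prod_type']
        exact Fintype.sum_equiv (Equiv.arrowProdEquivProdArrow _ _ _).symm _ _ fun _ => rfl
    _ = ∑ a, ∑ b, μ.real (P a ∩ Q b) * φ a b := by
        rw [sum_measureReal_join_mul (hP.inter hQ) hg i fun ab => φ ab.1 ab.2,
          Fintype.sum_prod_type]

end FiniteMeasure

section Entropy

variable {P : ι → Set X} {Q : κ → Set X}

theorem partEnt_nonneg [IsProbabilityMeasure μ] (R : κ → Set X) : 0 ≤ partEnt μ R :=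
  Finset.sum_nonneg fun _ _ => negMulLog_nonneg measureReal_nonneg measureReal_le_one

theorem partEnt_le_log_card [IsProbabilityMeasure μ] {R : κ → Set X} (hR : IsPartition R) :
    partEnt μ R ≤ log (Fintype.card κ) := by
  rcases isEmpty_or_nonempty κ with hκ | hκ
  · simp [partEnt]
  have hN : (0 : ℝ) < Fintype.card κ := Nat.cast_pos.2 Fintype.card_pos
  calc partEnt μ R ≤ -∑ k, μ.real (R k) * log (Fintype.card κ : ℝ)⁻¹ :=
        sum_negMulLog_le_neg_sum_mul_log (fun _ => measureReal_nonneg)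
          (fun _ => (inv_pos.2 hN).le) (fun _ h => absurd h (inv_pos.2 hN).ne')
          (by simp [hR.sum_measureReal, hN.ne'])
    _ = log (Fintype.card κ) := by rw [← Finset.sum_mul, hR.sum_measureReal, log_inv]; ring

theorem partEnt_le_sum_inter [IsFiniteMeasure μ] (hP : ∀ a, MeasurableSet (P a))
    (hQ : IsPartition Q) : partEnt μ P ≤ ∑ a, ∑ b, negMulLog (μ.real (P a ∩ Q b)) :=
  Finset.sum_le_sum fun a _ => by
    rw [← hQ.sum_measureReal_inter (μ := μ) (hP a)]
    exact negMulLog_sum_le _ fun _ _ => measureReal_nonneg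

theorem condEnt_self (hP : Pairwise (Function.onFun Disjoint P)) : condEnt μ P P = 0 := by
  refine Finset.sum_eq_zero fun a _ => Finset.sum_eq_zero fun b _ => ?_
  rw [condProb]
  rcases eq_or_ne a b with rfl | hab
  · by_cases h : μ.real (P a) = 0 <;> simp [h]
  · simp [(hP hab).inter_eq]

theorem condEnt_eq_sub [IsFiniteMeasure μ] (hP : IsPartition P) (hQ : ∀ b, MeasurableSet (Q b)) :
    condEnt μ P Q = ∑ a, ∑ b, negMulLog (μ.real (P a ∩ Q b)) - partEnt μ Q := by
  have hterm : ∀ a b, -μ.real (P a ∩ Q b) * log (condProb μ (P a) (Q b)) =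
      negMulLog (μ.real (P a ∩ Q b)) + μ.real (P a ∩ Q b) * log (μ.real (Q b)) := by
    intro a b
    rcases (measureReal_nonneg (μ := μ) (s := P a ∩ Q b)).eq_or_lt with h | h
    · simp [← h]
    have hQb : 0 < μ.real (Q b) := h.trans_le (measureReal_mono Set.inter_subset_right)
    rw [condProb, log_div h.ne' hQb.ne', negMulLog]
    ring
  have hmarg : ∑ a, ∑ b, μ.real (P a ∩ Q b) * log (μ.real (Q b)) =
      ∑ b, μ.real (Q b) * log (μ.real (Q b)) := by
    rw [Finset.sum_comm]
    simp_rw [← Finset.sum_mul, hP.sum_measureReal_inter' (hQ _)]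
  simp only [condEnt, hterm, Finset.sum_add_distrib, hmarg, partEnt, negMulLog, neg_mul,
    Finset.sum_neg_distrib, sub_neg_eq_add]

/-- `H_μ(P|Q) → 0` as `Q → P`: it is a continuous function of the matrix `μ(P a ∩ Q b)`, which
tends to the diagonal matrix of `P`, where it vanishes. -/
theorem exists_condEnt_lt [IsFiniteMeasure μ] {P : ι → Set X} (hP : IsPartition P) {c : ℝ}
    (hc : 0 < c) :
    ∃ δ > 0, ∀ Q : ι → Set X, IsPartition Q →
      ∑ i, μ.real (Q i ∆ P i) < δ → condEnt μ P Q < c := by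
  set F : (ι × ι → ℝ) → ℝ := fun m => ∑ ab, negMulLog (m ab) - ∑ b, negMulLog (∑ a, m (a, b))
  set M : (ι → Set X) → ι × ι → ℝ := fun Q ab => μ.real (P ab.1 ∩ Q ab.2)
  have hF : ∀ Q, IsPartition Q → condEnt μ P Q = F (M Q) := by
    intro Q hQ
    simp only [condEnt_eq_sub hP hQ.1, F, M, Fintype.sum_prod_type, partEnt,
      hP.sum_measureReal_inter' (hQ.1 _)]
  have hcont : Continuous F := by fun_prop
  obtain ⟨δ, hδ, hball⟩ := Metric.continuousAt_iff.1 (hcont.continuousAt (x := M P)) c hc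
  refine ⟨δ, hδ, fun Q hQ hclose => ?_⟩
  have hdist : dist (M Q) (M P) < δ := by
    refine (dist_pi_lt_iff hδ).2 fun ⟨a, b⟩ => lt_of_le_of_lt ?_ hclose
    calc dist (μ.real (P a ∩ Q b)) (μ.real (P a ∩ P b))
        ≤ μ.real ((P a ∩ Q b) ∆ (P a ∩ P b)) :=
          abs_measureReal_sub_le_measureReal_symmDiff
            ((hP.1 a).inter (hQ.1 b)).nullMeasurableSet ((hP.1 a).inter (hP.1 b)).nullMeasurableSet
      _ ≤ μ.real (Q b ∆ P b) := by
          rw [← Set.inter_symmDiff_distrib_left]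
          exact measureReal_mono Set.inter_subset_right
      _ ≤ ∑ i, μ.real (Q i ∆ P i) :=
          Finset.single_le_sum (f := fun i => μ.real (Q i ∆ P i))
            (fun i _ => measureReal_nonneg) (Finset.mem_univ b)
  have := hball hdist
  rw [← hF Q hQ, ← hF P hP, condEnt_self hP.2.1, Real.dist_eq, sub_zero] at this
  exact (le_abs_self _).trans_lt this

end Entropy

section Join

variable [IsFiniteMeasure μ] {P : ι → Set X} {Q : κ → Set X} {g : J → X → X}

omit [Fintype κ] in
theorem sum_prod_condProb_le_one (hP : IsPartition P) (hQ : ∀ b, MeasurableSet (Q b))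
    (η : J → κ) : ∑ ω : J → ι, ∏ j, condProb μ (P (ω j)) (Q (η j)) ≤ 1 := by
  rw [← Fintype.prod_sum fun j a => condProb μ (P a) (Q (η j))]
  refine Finset.prod_le_one (fun j _ => Finset.sum_nonneg fun _ _ => condProb_nonneg _ _)
    fun j _ => ?_
  simp only [condProb, ← Finset.sum_div, hP.sum_measureReal_inter' (hQ (η j))]
  exact div_self_le_one _

omit [Fintype ι] [Fintype κ] [Fintype J] [DecidableEq J] in
theorem measureReal_join_inter_join_le (hP : ∀ a, MeasurableSet (P a))
    (hQ : ∀ b, MeasurableSet (Q b)) (hg : ∀ j, MeasurePreserving (g j) μ μ) (ω : J → ι)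
    (η : J → κ) (j : J) :
    μ.real (join g P ω ∩ join g Q η) ≤ μ.real (P (ω j) ∩ Q (η j)) := by
  rw [join_inter_join, ← (hg j).measureReal_preimage ((hP _).inter (hQ _)).nullMeasurableSet]
  exact measureReal_mono (Set.iInter_subset (fun j => g j ⁻¹' (P (ω j) ∩ Q (η j))) j)

omit [Fintype ι] [Fintype κ] [Fintype J] [DecidableEq J] in
theorem condProb_pos_of_measureReal_join_inter_join_pos (hP : ∀ a, MeasurableSet (P a))
    (hQ : ∀ b, MeasurableSet (Q b)) (hg : ∀ j, MeasurePreserving (g j) μ μ) {ω : J → ι}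
    {η : J → κ} (h : 0 < μ.real (join g P ω ∩ join g Q η)) (j : J) :
    0 < condProb μ (P (ω j)) (Q (η j)) :=
  condProb_pos (h.trans_le (measureReal_join_inter_join_le hP hQ hg ω η j))

theorem neg_sum_mul_log_prod_condProb (hP : IsPartition P) (hQ : IsPartition Q)
    (hg : ∀ j, MeasurePreserving (g j) μ μ) :
    -∑ ω, ∑ η, μ.real (join g P ω ∩ join g Q η) *
        log (μ.real (join g Q η) * ∏ j, condProb μ (P (ω j)) (Q (η j))) =
      partEnt μ (join g Q) + Fintype.card J * condEnt μ P Q := by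
  have hsplit : ∀ ω η, μ.real (join g P ω ∩ join g Q η) *
      log (μ.real (join g Q η) * ∏ j, condProb μ (P (ω j)) (Q (η j))) =
      μ.real (join g P ω ∩ join g Q η) * log (μ.real (join g Q η)) +
        ∑ j, μ.real (join g P ω ∩ join g Q η) * log (condProb μ (P (ω j)) (Q (η j))) := by
    intro ω η
    rcases (measureReal_nonneg (μ := μ) (s := join g P ω ∩ join g Q η)).eq_or_lt with h | h
    · simp [← h]
    have hQη : 0 < μ.real (join g Q η) := h.trans_le (measureReal_mono Set.inter_subset_right)
    have hr := condProb_pos_of_measureReal_join_inter_join_pos hP.1 hQ.1 hg h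
    rw [log_mul hQη.ne' (Finset.prod_ne_zero_iff.2 fun j _ => (hr j).ne'),
      log_prod fun j _ => (hr j).ne', mul_add, Finset.mul_sum]
  have hjoinQ : ∑ ω, ∑ η, μ.real (join g P ω ∩ join g Q η) * log (μ.real (join g Q η)) =
      -partEnt μ (join g Q) := by
    rw [Finset.sum_comm]
    simp_rw [← Finset.sum_mul, (hP.join fun j => (hg j).measurable).sum_measureReal_inter'
      ((hQ.join fun j => (hg j).measurable).1 _), partEnt, negMulLog, neg_mul,
      Finset.sum_neg_distrib, neg_neg]
  have hcond : ∀ j, ∑ ω, ∑ η, μ.real (join g P ω ∩ join g Q η) *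
      log (condProb μ (P (ω j)) (Q (η j))) = -condEnt μ P Q := by
    intro j
    rw [sum_measureReal_join_inter_join_mul hP hQ hg j fun a b => log (condProb μ (P a) (Q b))]
    simp only [condEnt, neg_mul, Finset.sum_neg_distrib, neg_neg]
  simp_rw [hsplit, Finset.sum_add_distrib, hjoinQ]
  rw [Finset.sum_congr rfl fun ω _ => Finset.sum_comm, Finset.sum_comm]
  simp only [hcond, Finset.sum_const, Finset.card_univ, nsmul_eq_mul]
  ring

theorem partEnt_join_le_add (hP : IsPartition P) (hQ : IsPartition Q)
    (hg : ∀ j, MeasurePreserving (g j) μ μ) :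
    partEnt μ (join g P) ≤ partEnt μ (join g Q) + Fintype.card J * condEnt μ P Q := by
  have hPJ := hP.join fun j => (hg j).measurable
  have hQJ := hQ.join fun j => (hg j).measurable
  let p : (J → ι) × (J → κ) → ℝ := fun w => μ.real (join g P w.1 ∩ join g Q w.2)
  let q : (J → ι) × (J → κ) → ℝ :=
    fun w => μ.real (join g Q w.2) * ∏ j, condProb μ (P (w.1 j)) (Q (w.2 j))
  have hq : ∀ w, 0 ≤ q w := fun w =>
    mul_nonneg measureReal_nonneg (Finset.prod_nonneg fun _ _ => condProb_nonneg _ _)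
  have hpq : ∀ w, q w = 0 → p w = 0 := by
    intro w hw
    by_contra hp
    have hp := measureReal_nonneg.lt_of_ne (Ne.symm hp)
    refine (mul_pos (hp.trans_le (measureReal_mono Set.inter_subset_right))
      (Finset.prod_pos fun j _ =>
        condProb_pos_of_measureReal_join_inter_join_pos hP.1 hQ.1 hg hp j)).ne' hw
  have hsum : ∑ w, q w ≤ ∑ w, p w :=
    calc ∑ w, q w
        = ∑ η, μ.real (join g Q η) * ∑ ω : J → ι, ∏ j, condProb μ (P (ω j)) (Q (η j)) := by
          simp_rw [Fintype.sum_prod_type_right, Finset.mul_sum, q]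
      _ ≤ ∑ η, μ.real (join g Q η) := Finset.sum_le_sum fun η _ =>
          mul_le_of_le_one_right measureReal_nonneg (sum_prod_condProb_le_one hP hQ.1 η)
      _ = ∑ w, p w := by
          have hQ₁ := hQJ.sum_measureReal_inter (μ := μ) .univ
          have hPQ₁ := (hPJ.inter hQJ).sum_measureReal_inter (μ := μ) .univ
          simp only [Set.univ_inter] at hQ₁ hPQ₁
          exact hQ₁.trans hPQ₁.symm
  calc partEnt μ (join g P) ≤ ∑ w, negMulLog (p w) := by
        rw [Fintype.sum_prod_type]
        exact partEnt_le_sum_inter hPJ.1 hQJ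
    _ ≤ -∑ w, p w * log (q w) :=
        sum_negMulLog_le_neg_sum_mul_log (fun _ => measureReal_nonneg) hq hpq hsum
    _ = partEnt μ (join g Q) + Fintype.card J * condEnt μ P Q := by
        rw [Fintype.sum_prod_type]
        exact neg_sum_mul_log_prod_condProb hP hQ hg

end Join

theorem IsPosSeq.add_one_le {s : ℕ → ℕ} (hs : IsPosSeq s) (n : ℕ) : n + 1 ≤ s n :=
  (Nat.add_le_add_left hs.2 n).trans (hs.1.add_le_nat n 0)

theorem IsPosSeq.tendsto_div_rpow_two {s : ℕ → ℕ} (hs : IsPosSeq s) :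
    Tendsto (fun n : ℕ => ((n : ℝ≥0∞) + 1) / (s n : ℝ≥0∞) ^ (2 : ℝ)) atTop (nhds 0) := by
  refine tendsto_of_tendsto_of_tendsto_of_le_of_le tendsto_const_nhds
    (ENNReal.tendsto_inv_nat_nhds_zero.comp (tendsto_add_atTop_nat 1)) (fun _ => zero_le)
    fun n => ENNReal.div_le_of_le_mul ?_
  have hn : (n : ℝ≥0∞) + 1 ≤ s n := by exact_mod_cast hs.add_one_le n
  calc (n : ℝ≥0∞) + 1 = ((n : ℝ≥0∞) + 1)⁻¹ * ((n : ℝ≥0∞) + 1) ^ 2 := by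
        rw [sq, ← mul_assoc, ENNReal.inv_mul_cancel (by simp) (by simp), one_mul]
    _ ≤ ((n + 1 : ℕ) : ℝ≥0∞)⁻¹ * (s n : ℝ≥0∞) ^ (2 : ℝ) := by
        rw [ENNReal.rpow_two]
        push_cast
        gcongr

theorem upperDim_nonneg (s : ℕ → ℕ) : 0 ≤ upperDim s :=
  Real.sInf_nonneg fun _ hτ => hτ.1

theorem lowerDim_nonneg (s : ℕ → ℕ) : 0 ≤ lowerDim s :=
  Real.sInf_nonneg fun _ hτ => hτ.1

theorem upperDim_le_two {s : ℕ → ℕ} (hs : IsPosSeq s) : upperDim s ≤ 2 :=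
  csInf_le ⟨0, fun _ hτ => hτ.1⟩ ⟨zero_le_two, hs.tendsto_div_rpow_two.limsup_eq⟩

theorem lowerDim_le_two {s : ℕ → ℕ} (hs : IsPosSeq s) : lowerDim s ≤ 2 :=
  csInf_le ⟨0, fun _ hτ => hτ.1⟩ ⟨zero_le_two, hs.tendsto_div_rpow_two.liminf_eq⟩

section Sequence

variable {T : X → X} {P : ι → Set X} {Q : κ → Set X}

theorem seqJoinEnt_eq_partEnt (μ : Measure X) (T : X → X) (P : ι → Set X) (s : ℕ → ℕ)
    (n : ℕ) : seqJoinEnt μ T P s n = partEnt μ (join (fun i : ↥(Finset.range n) => T^[s i.1]) P) :=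
  rfl

theorem seqJoinEnt_le_add [IsFiniteMeasure μ] (hT : MeasurePreserving T μ μ)
    (hP : IsPartition P) (hQ : IsPartition Q) (s : ℕ → ℕ) (n : ℕ) :
    seqJoinEnt μ T P s n ≤ seqJoinEnt μ T Q s n + n * condEnt μ P Q := by
  simpa [seqJoinEnt_eq_partEnt] using
    partEnt_join_le_add hP hQ fun i : ↥(Finset.range n) => hT.iterate (s i.1)

theorem seqJoinEnt_div_le_log_card [IsProbabilityMeasure μ] (hT : Measurable T)
    (hP : IsPartition P) (s : ℕ → ℕ) (n : ℕ) :
    seqJoinEnt μ T P s n / n ≤ log (Fintype.card ι) := by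
  rcases n.eq_zero_or_pos with rfl | hn
  · simpa using log_natCast_nonneg _
  rw [div_le_iff₀ (Nat.cast_pos.2 hn), seqJoinEnt_eq_partEnt]
  simpa [Fintype.card_fun, log_pow, mul_comm] using
    partEnt_le_log_card (μ := μ) (hP.join fun i : ↥(Finset.range n) => hT.iterate (s i.1))

theorem IsEntGenSeq.of_condEnt_lt [IsProbabilityMeasure μ] (hT : MeasurePreserving T μ μ)
    (hP : IsPartition P) (hQ : IsPartition Q) {s : ℕ → ℕ} (hs : IsEntGenSeq μ T P s)
    (hPQ : condEnt μ P Q < atTop.liminf fun n : ℕ => seqJoinEnt μ T P s n / n) :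
    IsEntGenSeq μ T Q s := by
  obtain ⟨r, hr, hrL⟩ := exists_between hPQ
  have hP_ev : ∀ᶠ n : ℕ in atTop, r < seqJoinEnt μ T P s n / n :=
    eventually_lt_of_lt_liminf hrL
      (isBoundedUnder_of_eventually_ge (a := 0) (Eventually.of_forall fun n =>
        div_nonneg (partEnt_nonneg _) n.cast_nonneg))
  have hQ_ev : ∀ᶠ n : ℕ in atTop, r - condEnt μ P Q ≤ seqJoinEnt μ T Q s n / n := by
    filter_upwards [hP_ev, eventually_gt_atTop 0] with n hn hn₀
    have hn₀' : (0 : ℝ) < n := Nat.cast_pos.2 hn₀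
    rw [lt_div_iff₀ hn₀'] at hn
    rw [le_div_iff₀ hn₀']
    linarith [seqJoinEnt_le_add hT hP hQ s n]
  have hQ_bdd : IsCoboundedUnder (· ≥ ·) atTop fun n : ℕ => seqJoinEnt μ T Q s n / n :=
    isCoboundedUnder_ge_of_le atTop fun n => seqJoinEnt_div_le_log_card hT.measurable hQ s n
  exact ⟨hs.1, (sub_pos.2 hr).trans_le (le_liminf_of_le hQ_bdd hQ_ev)⟩

end Sequence

/-- `upperEntDimPart μ T P` and `lowerEntDimPart μ T P` are, by definition,
`sSup (entGenDims μ T P upperDim)` and `sSup (entGenDims μ T P lowerDim)`. -/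
def entGenDims (μ : Measure X) (T : X → X) (P : ι → Set X) (dim : (ℕ → ℕ) → ℝ) : Set ℝ :=
  {d | ∃ s, IsEntGenSeq μ T P s ∧ d = dim s}

theorem exists_sSup_entGenDims_sub_lt [IsProbabilityMeasure μ] {T : X → X}
    (hT : MeasurePreserving T μ μ) {dim : (ℕ → ℕ) → ℝ} {C : ℝ}
    (hdim : ∀ s, IsPosSeq s → 0 ≤ dim s ∧ dim s ≤ C) {P : ι → Set X} (hP : IsPartition P)
    {ε : ℝ} (hε : 0 < ε) :
    ∃ δ > 0, ∀ Q : ι → Set X, IsPartition Q → ∑ i, μ.real (Q i ∆ P i) < δ →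
      sSup (entGenDims μ T P dim) - ε < sSup (entGenDims μ T Q dim) := by
  by_cases hne : (entGenDims μ T P dim).Nonempty
  · obtain ⟨_, ⟨s, hs, rfl⟩, hlt⟩ := exists_lt_of_lt_csSup hne (sub_lt_self _ hε)
    obtain ⟨δ, hδ, hclose⟩ := exists_condEnt_lt (μ := μ) hP hs.2
    refine ⟨δ, hδ, fun Q hQ hQP => hlt.trans_le (le_csSup ?_ ⟨s, ?_, rfl⟩)⟩
    · exact ⟨C, by rintro _ ⟨s', hs', rfl⟩; exact (hdim s' hs'.1).2⟩
    · exact hs.of_condEnt_lt hT hP hQ (hclose Q hQ hQP)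
  · refine ⟨1, one_pos, fun Q _ _ => ?_⟩
    rw [Set.not_nonempty_iff_eq_empty.1 hne, Real.sSup_empty, zero_sub]
    exact (neg_neg_of_pos hε).trans_le
      (Real.sSup_nonneg (by rintro _ ⟨s, hs, rfl⟩; exact (hdim s hs.1).1))

end

/-- The upper and lower entropy dimensions of a partition are lower
semicontinuous in the partition: for every `ε > 0` there is `δ > 0` such that any
partition `β` (with the same index set) with `∑ i, μ(B_i Δ A_i) < δ` satisfies
`D̄_μ(T,β) > D̄_μ(T,α) - ε` and `D̲_μ(T,β) > D̲_μ(T,α) - ε`. -/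
theorem entDimPart_semicontinuous {X : Type*} [MeasurableSpace X]
    (μ : Measure X) [IsProbabilityMeasure μ] (T : X → X) (hT : MeasurePreserving T μ μ)
    {ι : Type*} [Fintype ι] (P : ι → Set X) (hP : IsPartition P)
    (ε : ℝ) (hε : 0 < ε) :
    ∃ δ : ℝ, 0 < δ ∧ ∀ Q : ι → Set X, IsPartition Q →
      (∑ i, (μ (Q i ∆ P i)).toReal) < δ →
      upperEntDimPart μ T P - ε < upperEntDimPart μ T Q ∧
      lowerEntDimPart μ T P - ε < lowerEntDimPart μ T Q := by
  obtain ⟨δ₁, hδ₁, hupper⟩ := exists_sSup_entGenDims_sub_lt hT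
    (fun s hs => ⟨upperDim_nonneg s, upperDim_le_two hs⟩) hP hε
  obtain ⟨δ₂, hδ₂, hlower⟩ := exists_sSup_entGenDims_sub_lt hT
    (fun s hs => ⟨lowerDim_nonneg s, lowerDim_le_two hs⟩) hP hε
  exact ⟨min δ₁ δ₂, lt_min hδ₁ hδ₂, fun Q hQ hQP =>
    ⟨hupper Q hQ (hQP.trans_le (min_le_left _ _)), hlower Q hQ (hQP.trans_le (min_le_right _ _))⟩⟩

end EntDim
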